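/- arXiv:1503.02472 — 2 statements merged into one kernel-verified Lean document; each statement's English description precedes it below -/
import Mathlib

section
/- Let F(z,t) be holomorphic in (z,t) ∈ ℂⁿ × ℂ near 0 such that every monomial in the t-expansion of ∂F/∂t lies in the Newton polyhedron generated by a finite vertex set S (i.e., Γ₊(∂_t F) ⊆ Γ₊ of the family F_t, whose vertex monomials are {z^α : α ∈ S}). Then there exist C > 0 and a neighborhood U of 0 with |∂F/∂t(z,t)| ≤ C·Σ_{α∈S} |z^α| for all (z,t) ∈ U. -/
open scoped Topology

/-- The Newton polyhedron generated by a finite vertex set `S ⊂ ℕⁿ`: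
`Γ₊ = conv(∪_{α∈S}(α + ℝ₊ⁿ))`. -/
def newtonPolyhedronOf (n : ℕ) (S : Finset (Fin n → ℕ)) : Set (Fin n → ℝ) :=
  convexHull ℝ {x | ∃ α ∈ S, ∀ i, (α i : ℝ) ≤ x i}

/-- Key estimate: if `β` lies in the Newton polyhedron of `S` and `0 ≤ r i ≤ 1`, then
`∏ r i ^ β i ≤ ∑_{α ∈ S} ∏ r i ^ α i`. -/
lemma key_monomial_bound (n : ℕ) (S : Finset (Fin n → ℕ)) (β : Fin n → ℕ)
    (hβ : (fun i => (β i : ℝ)) ∈ newtonPolyhedronOf n S)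
    (r : Fin n → ℝ) (hr0 : ∀ i, 0 ≤ r i) (hr1 : ∀ i, r i ≤ 1) :
    (∏ i, r i ^ β i) ≤ ∑ α ∈ S, ∏ i, r i ^ α i := by
  rw [newtonPolyhedronOf, convexHull_eq] at hβ
  obtain ⟨ι, t, w, zv, hw0, hw1, hzv, hcm⟩ := hβ
  rw [Finset.centerMass_eq_of_sum_1 _ _ hw1] at hcm
  -- choose for each j a vertex a j ∈ S with a j ≤ zv j
  have hch : ∀ j ∈ t, ∃ α ∈ S, ∀ i, (α i : ℝ) ≤ zv j i := fun j hj => hzv j hj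
  choose a haS hale using hch
  set M : ℝ := ∑ α ∈ S, ∏ i, r i ^ α i with hM
  have hMterm : ∀ α ∈ S, 0 ≤ ∏ i, r i ^ α i := fun α _ =>
    Finset.prod_nonneg fun i _ => pow_nonneg (hr0 i) _
  have hβi : ∀ i, (∑ j ∈ t.attach, w j.1 * (a j.1 j.2 i : ℝ)) ≤ (β i : ℝ) := by
    intro i
    have hc := congrFun hcm i
    simp only [Finset.sum_apply, Pi.smul_apply, smul_eq_mul] at hc
    rw [← hc, ← Finset.sum_attach t (fun j => w j * zv j i)]
    exact Finset.sum_le_sum fun j _ =>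
      mul_le_mul_of_nonneg_left (hale j.1 j.2 i) (hw0 j.1 j.2)
  calc (∏ i, r i ^ β i)
      = ∏ i, r i ^ ((β i : ℕ) : ℝ) := by
        refine Finset.prod_congr rfl fun i _ => ?_
        rw [Real.rpow_natCast]
    _ ≤ ∏ i, r i ^ (∑ j ∈ t.attach, w j * (a j.1 j.2 i : ℝ)) := by
        refine Finset.prod_le_prod (fun i _ => Real.rpow_nonneg (hr0 i) _) fun i _ => ?_
        refine Real.rpow_le_rpow_of_exponent_ge' (hr0 i) (hr1 i) ?_ ?_
        · exact Finset.sum_nonneg fun j _ =>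
            mul_nonneg (hw0 j.1 j.2) (Nat.cast_nonneg _)
        · exact hβi i
    _ = ∏ i, ∏ j ∈ t.attach, r i ^ (w j * (a j.1 j.2 i : ℝ)) := by
        refine Finset.prod_congr rfl fun i _ => ?_
        exact Real.rpow_sum_of_nonneg (hr0 i) fun j _ =>
          mul_nonneg (hw0 j.1 j.2) (Nat.cast_nonneg _)
    _ = ∏ j ∈ t.attach, ∏ i, r i ^ (w j * (a j.1 j.2 i : ℝ)) := Finset.prod_comm
    _ = ∏ j ∈ t.attach, (∏ i, r i ^ ((a j.1 j.2 i : ℕ) : ℝ)) ^ (w j.1) := by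
        refine Finset.prod_congr rfl fun j _ => ?_
        rw [← Real.finset_prod_rpow _ _ (fun i _ => Real.rpow_nonneg (hr0 i) _)]
        refine Finset.prod_congr rfl fun i _ => ?_
        rw [← Real.rpow_mul (hr0 i), mul_comm]
    _ ≤ ∑ j ∈ t.attach, w j.1 * (∏ i, r i ^ ((a j.1 j.2 i : ℕ) : ℝ)) := by
        refine Real.geom_mean_le_arith_mean_weighted _ _ _
          (fun j _ => hw0 j.1 j.2) ?_
          (fun j _ => Finset.prod_nonneg fun i _ => Real.rpow_nonneg (hr0 i) _)
        rw [Finset.sum_attach t w]; exact hw1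
    _ ≤ ∑ j ∈ t.attach, w j.1 * M := by
        refine Finset.sum_le_sum fun j _ => ?_
        refine mul_le_mul_of_nonneg_left ?_ (hw0 j.1 j.2)
        have : (∏ i, r i ^ ((a j.1 j.2 i : ℕ) : ℝ)) = ∏ i, r i ^ (a j.1 j.2 i : ℕ) := by
          refine Finset.prod_congr rfl fun i _ => Real.rpow_natCast _ _
        rw [this, hM]
        exact Finset.single_le_sum hMterm (haS j.1 j.2)
    _ = M := by
        rw [← Finset.sum_mul, Finset.sum_attach t w, hw1, one_mul]

/-- inequality (3.9): suppose `∂F/∂t(z,t) = Σ_{β∈B} h_β(t)·z^β` is a finite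
sum whose exponents `β` all lie in the Newton polyhedron generated by the vertex set `S`,
with coefficients `h_β` continuous (e.g. holomorphic) near `0`.  Then there are `C > 0`
and a neighborhood `U` of `0` with `|∂F/∂t(z,t)| ≤ C·Σ_{α∈S} |z^α|` on `U`. -/
theorem dtF_bounded_by_vertex_monomials (n : ℕ) (S : Finset (Fin n → ℕ))
    (hS : S.Nonempty) (B : Finset (Fin n → ℕ))
    (hB : ∀ β ∈ B, (fun i => (β i : ℝ)) ∈ newtonPolyhedronOf n S)
    (h : (Fin n → ℕ) → ℂ → ℂ) (hcont : ∀ β ∈ B, ContinuousAt (h β) 0)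
    (dtF : (Fin n → ℂ) → ℂ → ℂ)
    (hdtF : ∀ z t, dtF z t = ∑ β ∈ B, h β t * ∏ i, z i ^ β i) :
    ∃ C > (0 : ℝ), ∃ U ∈ 𝓝 ((0, 0) : (Fin n → ℂ) × ℂ), ∀ zt ∈ U,
      ‖dtF (Prod.fst zt) (Prod.snd zt)‖ ≤ C * ∑ α ∈ S, ‖∏ i, (Prod.fst zt) i ^ α i‖ := by
  set C : ℝ := (∑ β ∈ B, (‖h β 0‖ + 1)) + 1 with hC
  have hCpos : 0 < C := by
    have : (0:ℝ) ≤ ∑ β ∈ B, (‖h β 0‖ + 1) :=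
      Finset.sum_nonneg fun β _ => by positivity
    linarith
  refine ⟨C, hCpos, ?_⟩
  -- the neighborhood
  have ht : ∀ᶠ t in 𝓝 (0 : ℂ), ∀ β ∈ B, ‖h β t‖ ≤ ‖h β 0‖ + 1 := by
    rw [Filter.eventually_all_finset]
    intro β hβ
    have h1 : ∀ᶠ t in 𝓝 (0 : ℂ), ‖h β t - h β 0‖ < 1 := by
      have htend : Filter.Tendsto (fun t => ‖h β t - h β 0‖) (𝓝 0) (𝓝 0) := by
        have h0 : Filter.Tendsto (fun t => h β t - h β 0) (𝓝 0) (𝓝 (h β 0 - h β 0)) :=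
          ((hcont β hβ).tendsto).sub tendsto_const_nhds
        rw [sub_self] at h0
        simpa using h0.norm
      exact htend.eventually_lt_const one_pos
    filter_upwards [h1] with t h1
    calc ‖h β t‖ = ‖h β 0 + (h β t - h β 0)‖ := by ring_nf
      _ ≤ ‖h β 0‖ + ‖h β t - h β 0‖ := norm_add_le _ _
      _ ≤ ‖h β 0‖ + 1 := by linarith
  have hz : ∀ᶠ z in 𝓝 (0 : Fin n → ℂ), ∀ i, ‖z i‖ ≤ 1 := by
    filter_upwards [Metric.closedBall_mem_nhds (0 : Fin n → ℂ) one_pos] with z hzb i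
    calc ‖z i‖ ≤ ‖z‖ := norm_le_pi_norm z i
      _ ≤ 1 := by simpa [Metric.mem_closedBall] using hzb
  have hU : ∀ᶠ zt in 𝓝 ((0, 0) : (Fin n → ℂ) × ℂ),
      (∀ i, ‖zt.1 i‖ ≤ 1) ∧ ∀ β ∈ B, ‖h β zt.2‖ ≤ ‖h β 0‖ + 1 := by
    rw [nhds_prod_eq]
    exact hz.prod_mk ht
  refine ⟨_, hU, ?_⟩
  rintro ⟨z, t⟩ ⟨hz1, ht1⟩
  simp only
  rw [hdtF]
  set M : ℝ := ∑ α ∈ S, ‖∏ i, z i ^ α i‖ with hM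
  have hM0 : 0 ≤ M := Finset.sum_nonneg fun α _ => norm_nonneg _
  calc ‖∑ β ∈ B, h β t * ∏ i, z i ^ β i‖
      ≤ ∑ β ∈ B, ‖h β t * ∏ i, z i ^ β i‖ := norm_sum_le _ _
    _ ≤ ∑ β ∈ B, (‖h β 0‖ + 1) * M := by
        refine Finset.sum_le_sum fun β hβ => ?_
        rw [norm_mul]
        refine mul_le_mul (ht1 β hβ) ?_ (norm_nonneg _) (by positivity)
        have : ‖∏ i, z i ^ β i‖ = ∏ i, ‖z i‖ ^ β i := by
          rw [norm_prod]
          exact Finset.prod_congr rfl fun i _ => norm_pow _ _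
        rw [this, hM]
        have := key_monomial_bound n S β (hB β hβ) (fun i => ‖z i‖)
          (fun i => norm_nonneg _) hz1
        refine this.trans (le_of_eq ?_)
        refine Finset.sum_congr rfl fun α _ => ?_
        rw [norm_prod]
        exact Finset.prod_congr rfl fun i _ => (norm_pow _ _).symm
    _ = (∑ β ∈ B, (‖h β 0‖ + 1)) * M := by rw [Finset.sum_mul]
    _ ≤ C * M := by
        refine mul_le_mul_of_nonneg_right ?_ hM0
        rw [hC]; linarith
end

section
/- Let F : ℂⁿ × ℂ → ℂ be holomorphic near 0, X = F⁻¹(0) ∖ ({0}×ℂ) a smooth hypersurface (∇F ≠ 0 on X), and ρ a smooth nonnegative control function with ρ⁻¹(0) = {0}×ℂ. Suppose that along X near {0}×ℂ: (a) the pair (X, {0}×ℂ) is Whitney (a)-regular, and (b) |(∇_z ρ|_X)_t| ≪ |∇_z ρ|_X| as (z,t) → {0}×ℂ in X, where ∇_z ρ|_X = ∇_z ρ − (⟨∇_z ρ, ∇F⟩/|∇F|²)∇F and (∇_z ρ|_X)_t = −(⟨∇_z ρ, ∇F⟩/|∇F|²)·∂F/∂t. Then |∂F/∂t| ≪ ‖∇F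 ∧ ∇_z ρ‖ / |∇_z ρ| as (z,t) → {0}×ℂ in X. -/
open Asymptotics
open scoped InnerProductSpace

/-!
Write `N = ‖∇F‖`, `W = ‖∇_z ρ‖`, `c = |⟨∇_z ρ, ∇F⟩|`, so that `‖∇F ∧ ∇_z ρ‖ = √(N²W² − c²)`,
and split pointwise according to the size of `c`. If `2c ≥ NW`, hypothesis (b) gives
`NW|u| ≤ 2c|u| ≤ 2δ N ‖∇F ∧ ∇_z ρ‖`. If `2c ≤ NW`, then `‖∇F ∧ ∇_z ρ‖ ≥ NW/2`, and Whitney (a)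
gives `|u| W ≤ δ N W ≤ 2δ ‖∇F ∧ ∇_z ρ‖`.
-/

theorem half_le_sqrt_sq_sub_sq {a c : ℝ} (hc : 0 ≤ c) (hca : 2 * c ≤ a) :
    a / 2 ≤ Real.sqrt (a ^ 2 - c ^ 2) :=
  Real.le_sqrt_of_sq_le (by nlinarith)

section WedgeBound

variable {x c W N2 δ : ℝ}

theorem mul_le_of_inner_large (hN2 : 0 < N2) (hx : 0 ≤ x)
    (hcW : Real.sqrt N2 * W ≤ 2 * c)
    (hb : c * x / N2 ≤ δ * (Real.sqrt (N2 * W ^ 2 - c ^ 2) / Real.sqrt N2)) :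
    x * W ≤ 2 * δ * Real.sqrt (N2 * W ^ 2 - c ^ 2) := by
  set S := Real.sqrt (N2 * W ^ 2 - c ^ 2)
  have hN : 0 < Real.sqrt N2 := Real.sqrt_pos.mpr hN2
  have hcx : c * x ≤ δ * S * Real.sqrt N2 := by
    have hN2eq : δ * (S / Real.sqrt N2) * N2 = δ * S * (N2 / Real.sqrt N2) := by ring
    rwa [div_le_iff₀ hN2, hN2eq, Real.div_sqrt] at hb
  refine le_of_mul_le_mul_left ?_ hN
  nlinarith [mul_le_mul_of_nonneg_right hcW hx]

theorem mul_le_of_inner_small (hN2 : 0 ≤ N2) (hW : 0 ≤ W) (hc : 0 ≤ c) (hδ : 0 ≤ δ)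
    (hcW : 2 * c ≤ Real.sqrt N2 * W) (ha : x ≤ δ * Real.sqrt N2) :
    x * W ≤ 2 * δ * Real.sqrt (N2 * W ^ 2 - c ^ 2) := by
  have hS := half_le_sqrt_sq_sub_sq hc hcW
  rw [mul_pow, Real.sq_sqrt hN2] at hS
  calc x * W ≤ δ * Real.sqrt N2 * W := mul_le_mul_of_nonneg_right ha hW
    _ ≤ 2 * δ * Real.sqrt (N2 * W ^ 2 - c ^ 2) := by nlinarith

theorem mul_le_two_mul_sqrt_of_bounds (hN2 : 0 < N2) (hx : 0 ≤ x) (hW : 0 ≤ W) (hc : 0 ≤ c)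
    (hδ : 0 ≤ δ) (ha : x ≤ δ * Real.sqrt N2)
    (hb : c * x / N2 ≤ δ * (Real.sqrt (N2 * W ^ 2 - c ^ 2) / Real.sqrt N2)) :
    x * W ≤ 2 * δ * Real.sqrt (N2 * W ^ 2 - c ^ 2) := by
  rcases le_total (Real.sqrt N2 * W) (2 * c) with hcW | hcW
  · exact mul_le_of_inner_large hN2 hx hcW hb
  · exact mul_le_of_inner_small hN2.le hW hc hδ hcW ha

end WedgeBound

theorem c_regularity_criterion_general (n : ℕ) {P : Type*} (l : Filter P)
    (u : P → ℂ) (v w : P → EuclideanSpace ℂ (Fin n))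
    (hw : ∀ᶠ p in l, w p ≠ 0)
    (ha : (fun p => ‖u p‖) =o[l] fun p => Real.sqrt (‖v p‖ ^ 2 + ‖u p‖ ^ 2))
    (hb : (fun p => ‖⟪w p, v p⟫_ℂ‖ * ‖u p‖ / (‖v p‖ ^ 2 + ‖u p‖ ^ 2)) =o[l]
      fun p => Real.sqrt ((‖v p‖ ^ 2 + ‖u p‖ ^ 2) * ‖w p‖ ^ 2 - ‖⟪w p, v p⟫_ℂ‖ ^ 2) /
        Real.sqrt (‖v p‖ ^ 2 + ‖u p‖ ^ 2)) :
    (fun p => ‖u p‖) =o[l]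
      fun p => Real.sqrt ((‖v p‖ ^ 2 + ‖u p‖ ^ 2) * ‖w p‖ ^ 2 - ‖⟪w p, v p⟫_ℂ‖ ^ 2) /
        ‖w p‖ := by
  refine isLittleO_iff.mpr fun ε hε => ?_
  filter_upwards [hw, ha.bound (half_pos hε), hb.bound (half_pos hε)] with p hwp ha' hb'
  simp only [Real.norm_eq_abs, abs_norm] at ha' hb' ⊢
  rw [abs_of_nonneg (by positivity)] at ha' ⊢
  rw [abs_of_nonneg (by positivity), abs_of_nonneg (by positivity)] at hb'
  rw [← mul_div_assoc, le_div_iff₀ (norm_pos_iff.mpr hwp)]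
  rcases (norm_nonneg (u p)).eq_or_lt with hu | hu
  · rw [← hu, zero_mul]
    positivity
  have hN2 : 0 < ‖v p‖ ^ 2 + ‖u p‖ ^ 2 := by positivity
  refine (mul_le_two_mul_sqrt_of_bounds hN2 hu.le (norm_nonneg _) (norm_nonneg _)
    (half_pos hε).le ha' hb').trans_eq ?_
  ring

/-- STATEMENT 14 ((ii) ⇒ (iii) in the criterion for Bekka (c)-regularity), stated in
gradient form.  Along the filter `l` of points of `X = F⁻¹(0) ∖ ({0}×ℂ)` approaching
`{0}×ℂ`, write `v = ∇_z F`, `u = ∂F/∂t` (so the full gradient is `∇F = (v,u)`, with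
`‖∇F‖² = ‖v‖² + |u|²`) and `w = ∇_z ρ`.  Since `w` has zero `t`-component,
`⟨∇_z ρ, ∇F⟩ = ⟪w, v⟫` and `‖∇F ∧ ∇_z ρ‖² = ‖∇F‖²‖w‖² − |⟪w,v⟫|²`.  Assume:
`∇F ≠ 0` and `w ≠ 0` along `l`;
(a) Whitney (a)-regularity in the form `|∂F/∂t| ≪ ‖∇F‖`; and
(b) `|(∇_z ρ|_X)_t| = |⟪w,v⟫|·|u|/‖∇F‖² ≪ ‖∇_z ρ|_X‖ = ‖∇F ∧ ∇_z ρ‖/‖∇F‖`.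
Then `|∂F/∂t| ≪ ‖∇F ∧ ∇_z ρ‖ / ‖∇_z ρ‖`. -/
theorem c_regularity_criterion (n : ℕ) {P : Type*} (l : Filter P)
    (u : P → ℂ) (v w : P → EuclideanSpace ℂ (Fin n))
    (hgrad : ∀ᶠ p in l, ¬(v p = 0 ∧ u p = 0))
    (hw : ∀ᶠ p in l, w p ≠ 0)
    (ha : (fun p => ‖u p‖) =o[l] fun p => Real.sqrt (‖v p‖ ^ 2 + ‖u p‖ ^ 2))
    (hb : (fun p => ‖⟪w p, v p⟫_ℂ‖ * ‖u p‖ / (‖v p‖ ^ 2 + ‖u p‖ ^ 2)) =o[l]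
      fun p => Real.sqrt ((‖v p‖ ^ 2 + ‖u p‖ ^ 2) * ‖w p‖ ^ 2 - ‖⟪w p, v p⟫_ℂ‖ ^ 2) /
        Real.sqrt (‖v p‖ ^ 2 + ‖u p‖ ^ 2)) :
    (fun p => ‖u p‖) =o[l]
      fun p => Real.sqrt ((‖v p‖ ^ 2 + ‖u p‖ ^ 2) * ‖w p‖ ^ 2 - ‖⟪w p, v p⟫_ℂ‖ ^ 2) /
        ‖w p‖ :=
  c_regularity_criterion_general n l u v w hw ha hb
end
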